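/- Let X ∈ ℝ^{n×N}, let e ∈ ℝ^N be the all-ones vector, and let μ = (1/N) X e ∈ ℝ^n be the row-mean vector of X. Let A = [eᵀ; X] ∈ ℝ^{(n+1)×N} be the matrix obtained by stacking eᵀ on top of X, and let à = [eᵀ; X − μ eᵀ] be the matrix obtained by stacking eᵀ on top of the centered data matrix. Assume both A and à have full row rank. Then κ(Ã) ≤ κ(A), where for a full-row-rank matrix B, κ(B) denotes the ratio of its largest singular value to its smallest nonzero singular value. -/

import Mathlib

/-!
Write `u = (a, v)`, with `a` the coefficient of the row `eᵀ`. The rows of `X - μeᵀ` are orthogonal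
to `e`, so with `R(v) = ‖(X - μeᵀ)ᵀ v‖²` we get `‖Ãᵀu‖² = N a² + R(v)` and
`‖Aᵀu‖² = N (a + μ ⬝ v)² + R(v)`. If the sign of `a` is chosen so that `|±a + μ ⬝ v| ≥ |a|`,
then `(±a, v)` has the same norm as `u` and `‖Aᵀ(±a, v)‖ ≥ ‖Ãᵀu‖`, so the largest singular value
cannot decrease. If instead the sign is chosen so that `|±a - μ ⬝ v| ≥ |a|`, then `(±a - μ ⬝ v, v)`
has norm at least `‖u‖` and `‖Aᵀ(±a - μ ⬝ v, v)‖ = ‖Ãᵀu‖`, so the smallest one cannot increase.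
-/

open scoped Matrix

/-- The condition number of a full-row-rank matrix `B ∈ ℝ^{d×N}`: the ratio of its
largest singular value to its smallest nonzero singular value, obtained as the
supremum and infimum of `‖Bᵀ u‖` over unit vectors `u ∈ ℝ^d`. -/
noncomputable def rowCondNum {d N : ℕ} (B : Matrix (Fin d) (Fin N) ℝ) : ℝ :=
  (⨆ u : Metric.sphere (0 : EuclideanSpace ℝ (Fin d)) 1, ‖Matrix.toEuclideanLin Bᵀ u‖) /
  (⨅ u : Metric.sphere (0 : EuclideanSpace ℝ (Fin d)) 1, ‖Matrix.toEuclideanLin Bᵀ u‖)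

open Matrix Metric Finset

lemma iSup_div_iInf_le_of_forall_exists {ι : Type*} [Nonempty ι] {f g : ι → ℝ}
    (hf_nonneg : ∀ i, 0 ≤ f i) (hf_above : BddAbove (Set.range f)) (hf_pos : 0 < ⨅ i, f i)
    (hsup : ∀ i, ∃ j, g i ≤ f j) (hinf : ∀ i, ∃ j, f j ≤ g i) :
    (⨆ i, g i) / (⨅ i, g i) ≤ (⨆ i, f i) / (⨅ i, f i) := by
  have hf_below : BddBelow (Set.range f) := ⟨0, by rintro _ ⟨i, rfl⟩; exact hf_nonneg i⟩
  have hsup_nonneg : 0 ≤ ⨆ i, f i :=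
    (hf_nonneg (Classical.arbitrary ι)).trans (le_ciSup hf_above _)
  refine div_le_div₀ hsup_nonneg (ciSup_le fun i => ?_) hf_pos (le_ciInf fun i => ?_)
  · obtain ⟨j, hj⟩ := hsup i
    exact hj.trans (le_ciSup hf_above j)
  · obtain ⟨j, hj⟩ := hinf i
    exact (ciInf_le hf_below j).trans hj

section SphereNorm

variable {E F : Type*} [NormedAddCommGroup E] [NormedSpace ℝ E] [FiniteDimensional ℝ E]
  [NormedAddCommGroup F] [NormedSpace ℝ F]

lemma LinearMap.bddAbove_range_norm_sphere (f : E →ₗ[ℝ] F) :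
    BddAbove (Set.range fun u : sphere (0 : E) 1 => ‖f u‖) := by
  refine ⟨‖LinearMap.toContinuousLinearMap f‖, ?_⟩
  rintro _ ⟨u, rfl⟩
  simpa [mem_sphere_zero_iff_norm.mp u.2] using
    (LinearMap.toContinuousLinearMap f).le_opNorm u

lemma LinearMap.iInf_norm_sphere_pos [Nontrivial E] {f : E →ₗ[ℝ] F}
    (hf : Function.Injective f) : 0 < ⨅ u : sphere (0 : E) 1, ‖f u‖ := by
  obtain ⟨K, hK, hanti⟩ := f.injective_iff_antilipschitz.mp hf
  have := NormedSpace.sphere_nonempty_rclike ℝ (E := E) (r := 1) zero_le_one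
  have hK' : (0 : ℝ) < K := hK
  refine (inv_pos.mpr hK').trans_le (le_ciInf fun u => ?_)
  have hu := (LinearMap.toContinuousLinearMap f).bound_of_antilipschitz hanti u
  rw [mem_sphere_zero_iff_norm.mp u.2] at hu
  exact (inv_le_iff_one_le_mul₀' hK').mpr hu

end SphereNorm

lemma Matrix.injective_toEuclideanLin_transpose_of_rank_eq {m n : Type*} [Fintype m]
    [DecidableEq m] [Fintype n] {B : Matrix m n ℝ} (hB : B.rank = Fintype.card m) :
    Function.Injective (toEuclideanLin Bᵀ) := by
  have hker : LinearMap.ker Bᵀ.mulVecLin = ⊥ := by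
    have h := LinearMap.finrank_range_add_finrank_ker Bᵀ.mulVecLin
    rw [← Matrix.rank, rank_transpose, hB, Module.finrank_fintype_fun_eq_card] at h
    exact Submodule.finrank_eq_zero.mp (by omega)
  intro x y hxy
  rw [toLpLin_apply, toLpLin_apply] at hxy
  exact WithLp.ofLp_injective 2 (LinearMap.ker_eq_bot.mp hker (WithLp.toLp_injective 2 hxy))

lemma rowCondNum_le_of_forall_exists {d N : ℕ} {B B' : Matrix (Fin (d + 1)) (Fin N) ℝ}
    (hB : B.rank = d + 1)
    (hsup : ∀ u, ∃ w, ‖w‖ = ‖u‖ ∧ ‖toEuclideanLin B'ᵀ u‖ ≤ ‖toEuclideanLin Bᵀ w‖)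
    (hinf : ∀ u, ∃ w, ‖u‖ ≤ ‖w‖ ∧ ‖toEuclideanLin Bᵀ w‖ ≤ ‖toEuclideanLin B'ᵀ u‖) :
    rowCondNum B' ≤ rowCondNum B := by
  have := NormedSpace.sphere_nonempty_rclike ℝ (E := EuclideanSpace ℝ (Fin (d + 1)))
    (r := 1) zero_le_one
  refine iSup_div_iInf_le_of_forall_exists (fun _ => norm_nonneg _)
    (LinearMap.bddAbove_range_norm_sphere _)
    (LinearMap.iInf_norm_sphere_pos (injective_toEuclideanLin_transpose_of_rank_eq
      (by rwa [Fintype.card_fin]))) (fun u => ?_) (fun u => ?_)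
  · have hu := mem_sphere_zero_iff_norm.mp u.2
    obtain ⟨w, hw, hle⟩ := hsup u
    exact ⟨⟨w, mem_sphere_zero_iff_norm.mpr (hw.trans hu)⟩, hle⟩
  · have hu := mem_sphere_zero_iff_norm.mp u.2
    obtain ⟨w, hw, hle⟩ := hinf u
    rw [hu] at hw
    have hw_pos : 0 < ‖w‖ := zero_lt_one.trans_le hw
    refine ⟨⟨‖w‖⁻¹ • w, ?_⟩, ?_⟩
    · rw [mem_sphere_zero_iff_norm, norm_smul, norm_inv, norm_norm, inv_mul_cancel₀ hw_pos.ne']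
    · rw [map_smul, norm_smul, norm_inv, norm_norm]
      exact (mul_le_of_le_one_left (norm_nonneg _) (inv_le_one_of_one_le₀ hw)).trans hle

lemma sum_sq_const_add_of_sum_eq_zero {ι : Type*} [Fintype ι] (c : ℝ) {d : ι → ℝ}
    (hd : ∑ i, d i = 0) : ∑ i, (c + d i) ^ 2 = Fintype.card ι * c ^ 2 + ∑ i, d i ^ 2 := by
  simp only [add_sq, sum_add_distrib, ← mul_sum, hd]
  simp [mul_comm]

lemma exists_sq_eq_and_sq_le_add_sq (a c : ℝ) : ∃ b, b ^ 2 = a ^ 2 ∧ a ^ 2 ≤ (b + c) ^ 2 := by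
  rcases le_total 0 (a * c) with h | h
  · exact ⟨a, rfl, by nlinarith⟩
  · exact ⟨-a, by ring, by nlinarith⟩

lemma EuclideanSpace.norm_sq_toLp_cons {n : ℕ} (a : ℝ) (v : Fin n → ℝ) :
    ‖WithLp.toLp 2 (Fin.cons a v : Fin (n + 1) → ℝ)‖ ^ 2 = a ^ 2 + ∑ i, v i ^ 2 := by
  simp [EuclideanSpace.real_norm_sq_eq, Fin.sum_univ_succ]

lemma EuclideanSpace.exists_eq_toLp_cons {n : ℕ} (u : EuclideanSpace ℝ (Fin (n + 1))) :
    ∃ a v, u = WithLp.toLp 2 (Fin.cons a v) :=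
  ⟨u 0, Fin.tail u.ofLp, by simp [Fin.cons_self_tail]⟩

section ExtendedDataMatrix

variable {n N : ℕ} {X : Matrix (Fin n) (Fin N) ℝ} {μ : Fin n → ℝ}
  {A Atil : Matrix (Fin (n + 1)) (Fin N) ℝ}

lemma norm_sq_toEuclideanLin_transpose_cons (hX : ∀ i, ∑ j, X i j = N * μ i)
    (hA : ∀ i j, A i j = Fin.cons (α := fun _ => ℝ) 1 (fun i' => X i' j) i)
    (a : ℝ) (v : Fin n → ℝ) :
    ‖toEuclideanLin Aᵀ (WithLp.toLp 2 (Fin.cons a v))‖ ^ 2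
      = N * (a + μ ⬝ᵥ v) ^ 2 + ∑ j, (∑ i, (X i j - μ i) * v i) ^ 2 := by
  have hcol : ∀ j, (Aᵀ *ᵥ Fin.cons a v) j = (a + μ ⬝ᵥ v) + ∑ i, (X i j - μ i) * v i := by
    intro j
    simp only [mulVec, dotProduct, Fin.sum_univ_succ, transpose_apply, hA, Fin.cons_zero,
      Fin.cons_succ, one_mul, sub_mul, sum_sub_distrib]
    ring
  have hcentered : ∑ j, ∑ i, (X i j - μ i) * v i = 0 := by
    rw [sum_comm]
    refine sum_eq_zero fun i _ => ?_
    simp [← sum_mul, sum_sub_distrib, hX]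
  rw [EuclideanSpace.real_norm_sq_eq, toLpLin_apply]
  simp only [hcol]
  rw [sum_sq_const_add_of_sum_eq_zero _ hcentered, Fintype.card_fin]

lemma norm_sq_toEuclideanLin_transpose_cons_centered (hX : ∀ i, ∑ j, X i j = N * μ i)
    (hAtil : ∀ i j, Atil i j = Fin.cons (α := fun _ => ℝ) 1 (fun i' => X i' j - μ i') i)
    (a : ℝ) (v : Fin n → ℝ) :
    ‖toEuclideanLin Atilᵀ (WithLp.toLp 2 (Fin.cons a v))‖ ^ 2
      = N * a ^ 2 + ∑ j, (∑ i, (X i j - μ i) * v i) ^ 2 := by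
  have hcentered : ∀ i, ∑ j, (X i j - μ i) = N * (0 : Fin n → ℝ) i := by
    simp [sum_sub_distrib, hX]
  simpa using norm_sq_toEuclideanLin_transpose_cons hcentered hAtil a v

variable (hX : ∀ i, ∑ j, X i j = N * μ i)
  (hA : ∀ i j, A i j = Fin.cons (α := fun _ => ℝ) 1 (fun i' => X i' j) i)
  (hAtil : ∀ i j, Atil i j = Fin.cons (α := fun _ => ℝ) 1 (fun i' => X i' j - μ i') i)
include hX hA hAtil

lemma exists_norm_eq_and_norm_centered_le (u : EuclideanSpace ℝ (Fin (n + 1))) :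
    ∃ w, ‖w‖ = ‖u‖ ∧ ‖toEuclideanLin Atilᵀ u‖ ≤ ‖toEuclideanLin Aᵀ w‖ := by
  obtain ⟨a, v, rfl⟩ := EuclideanSpace.exists_eq_toLp_cons u
  obtain ⟨b, hb, hle⟩ := exists_sq_eq_and_sq_le_add_sq a (μ ⬝ᵥ v)
  refine ⟨WithLp.toLp 2 (Fin.cons b v), ?_, ?_⟩
  · rw [← sq_eq_sq₀ (norm_nonneg _) (norm_nonneg _), EuclideanSpace.norm_sq_toLp_cons,
      EuclideanSpace.norm_sq_toLp_cons, hb]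
  · rw [← sq_le_sq₀ (norm_nonneg _) (norm_nonneg _),
      norm_sq_toEuclideanLin_transpose_cons_centered hX hAtil,
      norm_sq_toEuclideanLin_transpose_cons hX hA]
    gcongr

lemma exists_norm_le_and_norm_le_centered (u : EuclideanSpace ℝ (Fin (n + 1))) :
    ∃ w, ‖u‖ ≤ ‖w‖ ∧ ‖toEuclideanLin Aᵀ w‖ ≤ ‖toEuclideanLin Atilᵀ u‖ := by
  obtain ⟨a, v, rfl⟩ := EuclideanSpace.exists_eq_toLp_cons u
  obtain ⟨b, hb, hle⟩ := exists_sq_eq_and_sq_le_add_sq a (-(μ ⬝ᵥ v))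
  refine ⟨WithLp.toLp 2 (Fin.cons (b - μ ⬝ᵥ v) v), ?_, le_of_eq ?_⟩
  · rw [← sq_le_sq₀ (norm_nonneg _) (norm_nonneg _), EuclideanSpace.norm_sq_toLp_cons,
      EuclideanSpace.norm_sq_toLp_cons]
    exact add_le_add_left (sub_eq_add_neg b _ ▸ hle) _
  · rw [← sq_eq_sq₀ (norm_nonneg _) (norm_nonneg _),
      norm_sq_toEuclideanLin_transpose_cons_centered hX hAtil,
      norm_sq_toEuclideanLin_transpose_cons hX hA, sub_add_cancel, hb]

end ExtendedDataMatrix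

theorem stmt_14_general (n N : ℕ) (X : Matrix (Fin n) (Fin N) ℝ)
    (μ : Fin n → ℝ) (hμ : ∀ i, μ i = (1 / (N : ℝ)) * ∑ j, X i j)
    (A Atil : Matrix (Fin (n + 1)) (Fin N) ℝ)
    (hA : ∀ i j, A i j = Fin.cons (α := fun _ => ℝ) 1 (fun i' => X i' j) i)
    (hAtil : ∀ i j, Atil i j = Fin.cons (α := fun _ => ℝ) 1 (fun i' => X i' j - μ i') i)
    (hArank : A.rank = n + 1) :
    rowCondNum Atil ≤ rowCondNum A := by
  have hN : (N : ℝ) ≠ 0 := Nat.cast_ne_zero.mpr (by have := hArank ▸ A.rank_le_width; omega)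
  have hX : ∀ i, ∑ j, X i j = N * μ i := fun i => by rw [hμ i]; field_simp
  exact rowCondNum_le_of_forall_exists hArank (exists_norm_eq_and_norm_centered_le hX hA hAtil)
    (exists_norm_le_and_norm_le_centered hX hA hAtil)

/-- **Centering does not worsen the conditioning of the extended data matrix**
(Theorem 4 of the paper / Theorem 4 of Lange-Zheng-Ye). For `μ = (1/N) X e` the
row-mean vector, `A = [eᵀ; X]` and `Ã = [eᵀ; X - μ eᵀ]` both of full row rank,
we have `κ(Ã) ≤ κ(A)`. -/
theorem stmt_14 (n N : ℕ) (X : Matrix (Fin n) (Fin N) ℝ)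
    (μ : Fin n → ℝ) (hμ : ∀ i, μ i = (1 / (N : ℝ)) * ∑ j, X i j)
    (A Atil : Matrix (Fin (n + 1)) (Fin N) ℝ)
    (hA : ∀ i j, A i j = Fin.cons (α := fun _ => ℝ) 1 (fun i' => X i' j) i)
    (hAtil : ∀ i j, Atil i j = Fin.cons (α := fun _ => ℝ) 1 (fun i' => X i' j - μ i') i)
    (hArank : A.rank = n + 1) (hAtilrank : Atil.rank = n + 1) :
    rowCondNum Atil ≤ rowCondNum A :=
  stmt_14_general n N X μ hμ A Atil hA hAtil hArank
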